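/- arXiv:math/0504163 — 7 statements merged into one kernel-verified Lean document; each statement's English description precedes it below -/
import Mathlib

section
/- Let f(y) = (1/2)y². For every initial data x₀, y₀, z₀, x₁, y₁, z₁ ∈ ℝ there exist twice continuously differentiable functions x, y, x̃ : ℝ → ℝ defined on all of ℝ with x(0)=x₀, x'(0)=x₁, y(0)=y₀, y'(0)=y₁, x̃(0)=z₀, x̃'(0)=z₁, satisfying the geodesic system x'' = 0, y'' = −f'(y)·(x')² = −(x')²·y, x̃'' = 2·f'(y)·x'·y' = 2y·x'·y' on all of ℝ. (Hence the manifold S₊ = M_{f} with f(y)=(1/2)y² is geodesically complete.) -/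
/-!
Along a geodesic `x' ≡ x₁` is constant, so the `y`-equation is the harmonic oscillator
`y'' = -x₁² y`, solved globally by trigonometric functions (or affinely when `x₁ = 0`).
Then `2 y x' y' = (x₁ y²)'`, so `x̃` is a double antiderivative of a globally defined function.
-/

open Real

lemma exists_contDiff_two_primitive {g : ℝ → ℝ} (hg : ContDiff ℝ 1 g) (z₀ : ℝ) :
    ∃ z : ℝ → ℝ, ContDiff ℝ 2 z ∧ z 0 = z₀ ∧ deriv z = g := by
  have hz : ∀ t, HasDerivAt (fun u => z₀ + ∫ s in (0 : ℝ)..u, g s) (g t) t := fun t =>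
    (hg.continuous.integral_hasStrictDerivAt 0 t).hasDerivAt.const_add z₀
  have hderiv : deriv (fun u => z₀ + ∫ s in (0 : ℝ)..u, g s) = g := funext fun t => (hz t).deriv
  refine ⟨_, ?_, by simp, hderiv⟩
  exact contDiff_succ_iff_deriv.mpr ⟨fun t => (hz t).differentiableAt, by simp, hderiv ▸ hg⟩

lemma exists_harmonic_oscillator (ω y₀ y₁ : ℝ) :
    ∃ y : ℝ → ℝ, ContDiff ℝ 2 y ∧ y 0 = y₀ ∧ deriv y 0 = y₁ ∧
      ∀ t, deriv (deriv y) t = -ω ^ 2 * y t := by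
  rcases eq_or_ne ω 0 with rfl | hω
  · refine ⟨fun t => y₀ + y₁ * t, by fun_prop, by simp, by simp, fun t => by simp⟩
  set y := fun t => y₀ * cos (ω * t) + y₁ / ω * sin (ω * t)
  set y' := fun t => -(y₀ * ω) * sin (ω * t) + y₁ * cos (ω * t)
  have hωt : ∀ t : ℝ, HasDerivAt (fun t => ω * t) ω t := fun t => by
    simpa using (hasDerivAt_id t).const_mul ω
  have hy : ∀ t, HasDerivAt y (y' t) t := fun t =>
    (((hωt t).cos.const_mul y₀).add ((hωt t).sin.const_mul (y₁ / ω))).congr_deriv <| by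
      field_simp [y']
      ring
  have hy' : ∀ t, HasDerivAt y' (-ω ^ 2 * y t) t := fun t =>
    (((hωt t).sin.const_mul (-(y₀ * ω))).add ((hωt t).cos.const_mul y₁)).congr_deriv <| by
      simp only [y]
      field_simp
      ring
  have hdy : deriv y = y' := funext fun t => (hy t).deriv
  refine ⟨y, by fun_prop, by simp [y], by simp [hdy, y'], fun t => ?_⟩
  rw [hdy, (hy' t).deriv]

lemma exists_contDiff_two_deriv_deriv_eq_two_mul_mul_deriv (c z₀ z₁ : ℝ) {y : ℝ → ℝ}
    (hy : ContDiff ℝ 2 y) :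
    ∃ z : ℝ → ℝ, ContDiff ℝ 2 z ∧ z 0 = z₀ ∧ deriv z 0 = z₁ ∧
      ∀ t, deriv (deriv z) t = 2 * y t * c * deriv y t := by
  have hy1 : ContDiff ℝ 1 y := hy.of_le (by norm_num)
  obtain ⟨z, hz, hz0, hdz⟩ :=
    exists_contDiff_two_primitive (g := fun t => z₁ + c * (y t ^ 2 - y 0 ^ 2)) (by fun_prop) z₀
  refine ⟨z, hz, hz0, by simp [hdz], fun t => ?_⟩
  have hyt : HasDerivAt y (deriv y t) t := (hy1.differentiable one_ne_zero t).hasDerivAt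
  have hg : HasDerivAt (fun t => z₁ + c * (y t ^ 2 - y 0 ^ 2)) (c * (2 * y t * deriv y t)) t := by
    simpa using (((hyt.pow 2).sub_const (y 0 ^ 2)).const_mul c).const_add z₁
  rw [hdz, hg.deriv]
  ring

/-- Geodesic completeness of `S₊ = M_f` for `f(y) = (1/2) y²`:
every solution of the geodesic system `x'' = 0`, `y'' = -(x')² y`,
`x̃'' = 2 y x' y'` with prescribed initial data exists on all of `ℝ`. -/
theorem Splus_geodesically_complete (x₀ y₀ z₀ x₁ y₁ z₁ : ℝ) :
    ∃ x y xt : ℝ → ℝ,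
      ContDiff ℝ 2 x ∧ ContDiff ℝ 2 y ∧ ContDiff ℝ 2 xt ∧
      x 0 = x₀ ∧ deriv x 0 = x₁ ∧
      y 0 = y₀ ∧ deriv y 0 = y₁ ∧
      xt 0 = z₀ ∧ deriv xt 0 = z₁ ∧
      (∀ t : ℝ, deriv (deriv x) t = 0) ∧
      (∀ t : ℝ, deriv (deriv y) t = -(deriv x t) ^ 2 * y t) ∧
      (∀ t : ℝ, deriv (deriv xt) t = 2 * y t * deriv x t * deriv y t) := by
  obtain ⟨y, hy, hy0, hdy0, hy''⟩ := exists_harmonic_oscillator x₁ y₀ y₁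
  obtain ⟨xt, hxt, hxt0, hdxt0, hxt''⟩ :=
    exists_contDiff_two_deriv_deriv_eq_two_mul_mul_deriv x₁ z₀ z₁ hy
  refine ⟨fun t => x₀ + x₁ * t, y, xt, by fun_prop, hy, hxt, by simp, by simp,
    hy0, hdy0, hxt0, hdxt0, by simp, fun t => by simp [hy''], fun t => by simp [hxt'']⟩
end

section
/- Let f(y) = −(1/2)y². For every initial data x₀, y₀, z₀, x₁, y₁, z₁ ∈ ℝ there exist twice continuously differentiable functions x, y, x̃ : ℝ → ℝ defined on all of ℝ with x(0)=x₀, x'(0)=x₁, y(0)=y₀, y'(0)=y₁, x̃(0)=z₀, x̃'(0)=z₁, satisfying the geodesic system x'' = 0, y'' = −f'(y)·(x')² = (x')²·y, x̃'' = 2·f'(y)·x'·y' = −2y·x'·y' on all of ℝ. (Hence the manifold S₋ = M_{f} with f(y)=−(1/2)y² is geodesically complete.) -/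
/-!
The first equation makes `x` affine, `x t = x₀ + x₁ t`, so the second becomes the linear equation
`y'' = x₁² y`, solved on all of `ℝ` by `y₀ cosh (x₁ t) + (y₁ / x₁) sinh (x₁ t)` (by `y₀ + y₁ t` when
`x₁ = 0`). The third equation then reads `x̃'' = -x₁ (y²)'`, so `x̃` is obtained by integrating
`x̃' = z₁ - x₁ (y² - y₀²)`.
-/

open Real
open scoped ContDiff

lemma exists_contDiff_succ_antideriv {n : ℕ∞} {g : ℝ → ℝ} (hg : ContDiff ℝ n g) (c : ℝ) :
    ∃ F : ℝ → ℝ, ContDiff ℝ (n + 1) F ∧ F 0 = c ∧ deriv F = g := by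
  have hF : ∀ t, HasDerivAt (fun t => c + ∫ s in (0 : ℝ)..t, g s) (g t) t := fun t =>
    ((hg.continuous.integral_hasStrictDerivAt 0 t).hasDerivAt).const_add c
  have hderiv : deriv (fun t => c + ∫ s in (0 : ℝ)..t, g s) = g := funext fun t => (hF t).deriv
  refine ⟨_, contDiff_succ_iff_deriv.2 ⟨fun t => (hF t).differentiableAt, by simp, ?_⟩, by simp,
    hderiv⟩
  rwa [hderiv]

lemma exists_smooth_deriv_deriv_eq_sq_mul (a y₀ y₁ : ℝ) :
    ∃ y : ℝ → ℝ, ContDiff ℝ ∞ y ∧ y 0 = y₀ ∧ deriv y 0 = y₁ ∧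
      ∀ t, deriv (deriv y) t = a ^ 2 * y t := by
  rcases eq_or_ne a 0 with rfl | ha
  · exact ⟨fun t => y₀ + y₁ * t, by fun_prop, by simp, by simp, by simp⟩
  have hcosh (t : ℝ) : HasDerivAt (fun t => cosh (a * t)) (sinh (a * t) * a) t :=
    (hasDerivAt_cosh _).comp t ((hasDerivAt_id t).const_mul a |>.congr_deriv (mul_one a))
  have hsinh (t : ℝ) : HasDerivAt (fun t => sinh (a * t)) (cosh (a * t) * a) t :=
    (hasDerivAt_sinh _).comp t ((hasDerivAt_id t).const_mul a |>.congr_deriv (mul_one a))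
  have hy' : deriv (fun t => y₀ * cosh (a * t) + y₁ / a * sinh (a * t)) =
      fun t => y₀ * a * sinh (a * t) + y₁ * cosh (a * t) := by
    funext t
    refine (((hcosh t).const_mul y₀).add ((hsinh t).const_mul (y₁ / a))).deriv.trans ?_
    field_simp
  refine ⟨fun t => y₀ * cosh (a * t) + y₁ / a * sinh (a * t), by fun_prop, by simp,
    by simp [hy'], fun t => ?_⟩
  rw [hy']
  refine (((hsinh t).const_mul (y₀ * a)).add ((hcosh t).const_mul y₁)).deriv.trans ?_
  field_simp

/-- Geodesic completeness of `S₊ = M_f` for `f(y) = -(1/2) y²`: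
every solution of the geodesic system `x'' = 0`, `y'' = (x')² y`,
`x̃'' = -2 y x' y'` with prescribed initial data exists on all of `ℝ`. -/
theorem Sminus_geodesically_complete (x₀ y₀ z₀ x₁ y₁ z₁ : ℝ) :
    ∃ x y xt : ℝ → ℝ,
      ContDiff ℝ 2 x ∧ ContDiff ℝ 2 y ∧ ContDiff ℝ 2 xt ∧
      x 0 = x₀ ∧ deriv x 0 = x₁ ∧
      y 0 = y₀ ∧ deriv y 0 = y₁ ∧
      xt 0 = z₀ ∧ deriv xt 0 = z₁ ∧
      (∀ t : ℝ, deriv (deriv x) t = 0) ∧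
      (∀ t : ℝ, deriv (deriv y) t = (deriv x t) ^ 2 * y t) ∧
      (∀ t : ℝ, deriv (deriv xt) t = -2 * y t * deriv x t * deriv y t) := by
  obtain ⟨y, hy, hy0, hy'0, hy''⟩ := exists_smooth_deriv_deriv_eq_sq_mul x₁ y₀ y₁
  have hyd : Differentiable ℝ y := hy.differentiable (by simp)
  have hg : ContDiff ℝ 1 fun t => z₁ - x₁ * (y t ^ 2 - y₀ ^ 2) := by
    have := contDiff_infty.1 hy 1
    fun_prop
  obtain ⟨xt, hxt, hxt0, hxt'⟩ := exists_contDiff_succ_antideriv hg z₀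
  refine ⟨fun t => x₀ + x₁ * t, y, xt, by fun_prop, contDiff_infty.1 hy 2, hxt, by simp, by simp,
    hy0, hy'0, hxt0, by simp [hxt', hy0], by simp, fun t => by simp [hy''], fun t => ?_⟩
  rw [hxt', (((((hyd t).hasDerivAt.fun_pow 2).sub_const (y₀ ^ 2)).const_mul x₁).const_sub z₁).deriv]
  simp only [deriv_const_add', deriv_const_mul_id']
  ring
end

section
/- Let f(y) = (1/2)y². If (x, y, x̃) : [0,1] → ℝ³ is a solution of the geodesic system x'' = 0, y'' = −(x')²·y, x̃'' = 2y·x'·y' with x(1) = x(0) + 2π, then y(1) = y(0). In particular, for any point P = (x₀, y₀, z₀) and any y₁ ≠ y₀ and z₁ ∈ ℝ, there is no solution γ of the geodesic system on [0,1] with γ(0) = P and γ(1) = (x₀ + 2π, y₁, z₁); hence the exponential map of S₊ at P is not surjective. -/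
/-!
Along a geodesic `x'' = 0`, so `x(1) = x(0) + 2π` forces `x' ≡ 2π` and the `y`-equation becomes
the harmonic oscillator `y'' = -(2π)² y`, all of whose solutions have period `1`. Periodicity is
read off the first integral `2π y cos 2πt - y' sin 2πt`.
-/

open Set Real

theorem eq_of_hasDerivAt_zero_Icc {f : ℝ → ℝ} {a b : ℝ}
    (hf : ∀ t ∈ Icc a b, HasDerivAt f 0 t) : ∀ t ∈ Icc a b, f t = f a :=
  constant_of_has_deriv_right_zero (fun t ht => (hf t ht).continuousAt.continuousWithinAt)
    fun t ht => (hf t (Ico_subset_Icc_self ht)).hasDerivWithinAt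

theorem deriv_mul_sub_eq_of_deriv_deriv_eq_zero {x : ℝ → ℝ} {a b : ℝ} (hab : a ≤ b)
    (hx : Differentiable ℝ x) (hx' : Differentiable ℝ (deriv x))
    (h : ∀ t ∈ Icc a b, deriv (deriv x) t = 0) :
    ∀ t ∈ Icc a b, deriv x t * (b - a) = x b - x a := by
  have hconst : ∀ t ∈ Icc a b, deriv x t = deriv x a :=
    eq_of_hasDerivAt_zero_Icc fun t ht => h t ht ▸ (hx' t).hasDerivAt
  have hlinear : ∀ t ∈ Icc a b, x t - deriv x a * t = x a - deriv x a * a :=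
    eq_of_hasDerivAt_zero_Icc fun t ht => by
      have := (hx t).hasDerivAt.sub ((hasDerivAt_id t).const_mul (deriv x a))
      rwa [hconst t ht, mul_one, sub_self] at this
  intro t ht
  rw [hconst t ht]
  linarith [hlinear b (right_mem_Icc.2 hab)]

/-- The first integral is `ω` times the value at time `0` of the solution through `(y t, y' t)`;
the factor `ω` avoids a division by `ω`. -/
theorem harmonic_first_integral_eq {y : ℝ → ℝ} {ω a b : ℝ} (hab : a ≤ b)
    (hy : Differentiable ℝ y) (hy' : Differentiable ℝ (deriv y))
    (h : ∀ t ∈ Icc a b, deriv (deriv y) t = -ω ^ 2 * y t) :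
    ω * y b * cos (ω * b) - deriv y b * sin (ω * b) =
      ω * y a * cos (ω * a) - deriv y a * sin (ω * a) := by
  refine eq_of_hasDerivAt_zero_Icc
    (f := fun t => ω * y t * cos (ω * t) - deriv y t * sin (ω * t)) (fun t ht => ?_) b
    (right_mem_Icc.2 hab)
  have hωt : HasDerivAt (fun s => ω * s) ω t := by simpa using (hasDerivAt_id t).const_mul ω
  exact ((((hy t).hasDerivAt.const_mul ω).mul hωt.cos).sub ((hy' t).hasDerivAt.mul hωt.sin))
    |>.congr_deriv (by rw [h t ht]; ring)

theorem Splus_geodesic_y_one_eq_y_zero {x y : ℝ → ℝ} (hx : ContDiff ℝ 2 x)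
    (hy : ContDiff ℝ 2 y) (hxeq : ∀ t ∈ Icc (0:ℝ) 1, deriv (deriv x) t = 0)
    (hyeq : ∀ t ∈ Icc (0:ℝ) 1, deriv (deriv y) t = -(deriv x t) ^ 2 * y t)
    (hx1 : x 1 = x 0 + 2 * π) : y 1 = y 0 := by
  have hspeed : ∀ t ∈ Icc (0:ℝ) 1, deriv x t = 2 * π := fun t ht => by
    have := deriv_mul_sub_eq_of_deriv_deriv_eq_zero zero_le_one (hx.differentiable two_ne_zero)
      hx.differentiable_deriv_two hxeq t ht
    linarith
  have hosc : ∀ t ∈ Icc (0:ℝ) 1, deriv (deriv y) t = -(2 * π) ^ 2 * y t := fun t ht => by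
    rw [hyeq t ht, hspeed t ht]
  have hinvariant := harmonic_first_integral_eq zero_le_one (hy.differentiable two_ne_zero)
    hy.differentiable_deriv_two hosc
  simp only [mul_one, mul_zero, cos_two_pi, sin_two_pi, cos_zero, sin_zero] at hinvariant
  exact mul_left_cancel₀ two_pi_pos.ne' (by linarith)

/-- On `S₊` (that is, `M_f` with `f(y) = (1/2) y²`), any geodesic
`γ = (x, y, x̃)` on `[0,1]` with `x(1) = x(0) + 2π` has `y(1) = y(0)`.
Consequently no geodesic segment joins `(x₀, y₀, z₀)` to
`(x₀ + 2π, y₁, z₁)` when `y₁ ≠ y₀`; hence the exponential map of `S₊`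
at any point is not surjective. -/
theorem Splus_exp_not_surjective :
    (∀ x y xt : ℝ → ℝ,
      ContDiff ℝ 2 x → ContDiff ℝ 2 y → ContDiff ℝ 2 xt →
      (∀ t ∈ Set.Icc (0:ℝ) 1, deriv (deriv x) t = 0) →
      (∀ t ∈ Set.Icc (0:ℝ) 1, deriv (deriv y) t = -(deriv x t) ^ 2 * y t) →
      (∀ t ∈ Set.Icc (0:ℝ) 1,
        deriv (deriv xt) t = 2 * y t * deriv x t * deriv y t) →
      x 1 = x 0 + 2 * Real.pi → y 1 = y 0) ∧
    (∀ x₀ y₀ z₀ y₁ z₁ : ℝ, y₁ ≠ y₀ →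
      ¬ ∃ x y xt : ℝ → ℝ,
        ContDiff ℝ 2 x ∧ ContDiff ℝ 2 y ∧ ContDiff ℝ 2 xt ∧
        (∀ t ∈ Set.Icc (0:ℝ) 1, deriv (deriv x) t = 0) ∧
        (∀ t ∈ Set.Icc (0:ℝ) 1, deriv (deriv y) t = -(deriv x t) ^ 2 * y t) ∧
        (∀ t ∈ Set.Icc (0:ℝ) 1,
          deriv (deriv xt) t = 2 * y t * deriv x t * deriv y t) ∧
        x 0 = x₀ ∧ y 0 = y₀ ∧ xt 0 = z₀ ∧
        x 1 = x₀ + 2 * Real.pi ∧ y 1 = y₁ ∧ xt 1 = z₁) := by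
  refine ⟨fun x y _ hx hy _ hxeq hyeq _ hx1 => Splus_geodesic_y_one_eq_y_zero hx hy hxeq hyeq hx1,
    ?_⟩
  rintro x₀ y₀ z₀ y₁ z₁ hne ⟨x, y, xt, hx, hy, -, hxeq, hyeq, -, rfl, rfl, -, hx1, rfl, -⟩
  exact hne (Splus_geodesic_y_one_eq_y_zero hx hy hxeq hyeq hx1)
end

section
/- Let f(y) = −(1/2)y². For every pair of points P, Q ∈ ℝ³ there exists a unique v ∈ ℝ³ such that the solution γ = (x, y, x̃) : ℝ → ℝ³ of the geodesic system x'' = 0, y'' = (x')²·y, x̃'' = −2y·x'·y' with γ(0) = P and γ'(0) = v satisfies γ(1) = Q. (Hence the exponential map of S₋ at every point P is a bijection from T_Pℝ³ onto ℝ³.) -/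
/-!
Along a geodesic of `S₋` the `x`-component is affine, say of slope `a`, so the `y`-component
solves the linear equation `y'' = a² y`. Its solution with `s 0 = 0`, `s' 0 = 1`, namely
`sinh (a t) / a` (or `t` if `a = 0`), does not vanish at `t = 1`; hence the boundary value problem
for `y'' = a² y` on `[0, 1]` has exactly one solution. Finally `x̃' + a y²` is constant along the
geodesic, so `x̃` is determined by `y` up to an affine function, which the endpoints fix.
-/

open Real

def SolvesLinODE (a : ℝ) (z : ℝ → ℝ) : Prop :=
  ContDiff ℝ 2 z ∧ ∀ t, deriv (deriv z) t = a ^ 2 * z t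

lemma eq_zero_of_hasDerivAt_mul_self {h : ℝ → ℝ} {c : ℝ} (hh : ∀ t, HasDerivAt h (c * h t) t)
    (h0 : h 0 = 0) (t : ℝ) : h t = 0 := by
  have hconst : ∀ s, HasDerivAt (fun s => exp (-c * s) * h s) 0 s := fun s =>
    ((((hasDerivAt_id s).const_mul (-c)).exp).mul (hh s)).congr_deriv (by simp; ring)
  have := is_const_of_deriv_eq_zero (fun s => (hconst s).differentiableAt)
    (fun s => (hconst s).deriv) t 0
  simpa [h0, exp_ne_zero] using this

lemma deriv_const_mul_add_const_mul {z w : ℝ → ℝ} (hz : Differentiable ℝ z)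
    (hw : Differentiable ℝ w) (c d : ℝ) :
    deriv (fun t => c * z t + d * w t) = fun t => c * deriv z t + d * deriv w t :=
  funext fun t => (((hz t).hasDerivAt.const_mul c).add ((hw t).hasDerivAt.const_mul d)).deriv

namespace SolvesLinODE

variable {a : ℝ} {z w : ℝ → ℝ}

lemma const_mul_add_const_mul (hz : SolvesLinODE a z) (hw : SolvesLinODE a w) (c d : ℝ) :
    SolvesLinODE a (fun t => c * z t + d * w t) := by
  obtain ⟨hz2, hz''⟩ := hz
  obtain ⟨hw2, hw''⟩ := hw
  refine ⟨by fun_prop, fun t => ?_⟩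
  rw [deriv_const_mul_add_const_mul (hz2.differentiable two_ne_zero)
      (hw2.differentiable two_ne_zero),
    deriv_const_mul_add_const_mul hz2.differentiable_deriv_two hw2.differentiable_deriv_two]
  simp only [hz'', hw'']
  ring

lemma eq_zero_of_initial (hz : SolvesLinODE a z) (h0 : z 0 = 0) (h0' : deriv z 0 = 0) (t : ℝ) :
    z t = 0 := by
  have hz1 : Differentiable ℝ z := hz.1.differentiable two_ne_zero
  -- `z'' - a² z = (d/dt + a) (z' - a z)`
  have hfirst : ∀ t, deriv z t - a * z t = 0 := eq_zero_of_hasDerivAt_mul_self (c := -a)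
    (fun s => by
      refine ((hz.1.differentiable_deriv_two s).hasDerivAt.sub
        ((hz1 s).hasDerivAt.const_mul a)).congr_deriv ?_
      rw [hz.2 s]; ring)
    (by simp [h0, h0'])
  exact eq_zero_of_hasDerivAt_mul_self (c := a)
    (fun s => by rw [← sub_eq_zero.mp (hfirst s)]; exact (hz1 s).hasDerivAt) h0 t

lemma deriv_eq_deriv_zero (hz : SolvesLinODE 0 z) (t : ℝ) : deriv z t = deriv z 0 :=
  is_const_of_deriv_eq_zero hz.1.differentiable_deriv_two (fun t => by simp [hz.2 t]) t 0

lemma hasDerivAt_cosh_mul (a t : ℝ) :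
    HasDerivAt (fun t => cosh (a * t)) (a * sinh (a * t)) t := by
  simpa [mul_comm] using ((hasDerivAt_id t).const_mul a).cosh

lemma hasDerivAt_sinh_mul (a t : ℝ) :
    HasDerivAt (fun t => sinh (a * t)) (a * cosh (a * t)) t := by
  simpa [mul_comm] using ((hasDerivAt_id t).const_mul a).sinh

lemma cosh_mul (a : ℝ) : SolvesLinODE a (fun t => cosh (a * t)) := by
  refine ⟨by fun_prop, fun t => ?_⟩
  rw [funext fun t => (hasDerivAt_cosh_mul a t).deriv,
    ((hasDerivAt_sinh_mul a t).const_mul a).deriv]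
  ring

lemma sinh_mul_div (a : ℝ) : SolvesLinODE a (fun t => sinh (a * t) / a) := by
  refine ⟨by fun_prop, fun t => ?_⟩
  rw [funext fun t => ((hasDerivAt_sinh_mul a t).div_const a).deriv,
    (((hasDerivAt_cosh_mul a t).const_mul a).div_const a).deriv]
  ring

lemma exists_conjugate_free (a : ℝ) :
    ∃ s, SolvesLinODE a s ∧ s 0 = 0 ∧ deriv s 0 = 1 ∧ s 1 ≠ 0 := by
  rcases eq_or_ne a 0 with rfl | ha
  · exact ⟨id, ⟨contDiff_id, fun t => by simp⟩, rfl, deriv_id 0, one_ne_zero⟩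
  · refine ⟨_, sinh_mul_div a, by simp, ?_, by simpa using ha⟩
    rw [((hasDerivAt_sinh_mul a 0).div_const a).deriv]
    simp [ha]

lemma eq_zero_of_boundary (hz : SolvesLinODE a z) (h0 : z 0 = 0) (h1 : z 1 = 0) (t : ℝ) :
    z t = 0 := by
  obtain ⟨s, hs, hs0, hs0', hs1⟩ := exists_conjugate_free a
  have hzs : ∀ t, z t = deriv z 0 * s t := fun t => by
    have hdiff := hz.const_mul_add_const_mul hs 1 (-deriv z 0)
    have := hdiff.eq_zero_of_initial (by simp [h0, hs0]) (by
      rw [deriv_const_mul_add_const_mul (hz.1.differentiable two_ne_zero)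
        (hs.1.differentiable two_ne_zero)]
      simp [hs0']) t
    linarith
  have hz0' : deriv z 0 = 0 := by simpa [hs1, h1] using (hzs 1).symm
  simpa [hz0'] using hzs t

lemma eq_of_boundary (hz : SolvesLinODE a z) (hw : SolvesLinODE a w) (h0 : z 0 = w 0)
    (h1 : z 1 = w 1) : z = w := funext fun t => by
  have := (hz.const_mul_add_const_mul hw 1 (-1)).eq_zero_of_boundary (by simp [h0])
    (by simp [h1]) t
  linarith

lemma exists_boundary (a p q : ℝ) : ∃ z, SolvesLinODE a z ∧ z 0 = p ∧ z 1 = q := by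
  obtain ⟨s, hs, hs0, -, hs1⟩ := exists_conjugate_free a
  refine ⟨_, (cosh_mul a).const_mul_add_const_mul hs p ((q - p * cosh a) / s 1), by simp [hs0], ?_⟩
  simp only [mul_one]
  field_simp
  ring

end SolvesLinODE

lemma eq_of_deriv_deriv_eq {u v : ℝ → ℝ} (hu : ContDiff ℝ 2 u) (hv : ContDiff ℝ 2 v)
    (h : ∀ t, deriv (deriv u) t = deriv (deriv v) t) (h0 : u 0 = v 0) (h1 : u 1 = v 1) :
    u = v := funext fun t => by
  have hdiff : SolvesLinODE 0 (fun t => 1 * u t + (-1) * v t) := by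
    refine ⟨by fun_prop, fun t => ?_⟩
    rw [deriv_const_mul_add_const_mul (hu.differentiable two_ne_zero)
        (hv.differentiable two_ne_zero),
      deriv_const_mul_add_const_mul hu.differentiable_deriv_two hv.differentiable_deriv_two]
    simp only [h]
    ring
  have := hdiff.eq_zero_of_boundary (by simp [h0]) (by simp [h1]) t
  linarith

lemma exists_deriv_deriv_eq_deriv {g : ℝ → ℝ} (hg : ContDiff ℝ 1 g) (p q : ℝ) :
    ∃ u : ℝ → ℝ, ContDiff ℝ 2 u ∧ (∀ t, deriv (deriv u) t = deriv g t) ∧ u 0 = p ∧ u 1 = q := by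
  set k := q - p - ∫ s in (0 : ℝ)..1, g s
  have hu : ∀ t, HasDerivAt (fun t => p + k * t + ∫ s in (0 : ℝ)..t, g s) (k + g t) t :=
    fun t => ((((hasDerivAt_id t).const_mul k).const_add p).add
      (hg.continuous.integral_hasStrictDerivAt 0 t).hasDerivAt).congr_deriv (by simp)
  have hu' := funext fun t => (hu t).deriv
  refine ⟨fun t => p + k * t + ∫ s in (0 : ℝ)..t, g s, ?_, fun t => ?_, by simp,
    by simp [k]; ring⟩
  · rw [show (2 : WithTop ℕ∞) = 1 + 1 from rfl, contDiff_succ_iff_deriv, hu']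
    exact ⟨fun t => (hu t).differentiableAt, by simp, by fun_prop⟩
  · rw [hu', deriv_const_add]

structure IsSminusGeodesic (x y xt : ℝ → ℝ) : Prop where
  contDiff_x : ContDiff ℝ 2 x
  contDiff_y : ContDiff ℝ 2 y
  contDiff_xt : ContDiff ℝ 2 xt
  ode_x : ∀ t, deriv (deriv x) t = 0
  ode_y : ∀ t, deriv (deriv y) t = (deriv x t) ^ 2 * y t
  ode_xt : ∀ t, deriv (deriv xt) t = -2 * y t * deriv x t * deriv y t

namespace IsSminusGeodesic

variable {x y xt : ℝ → ℝ}

lemma solvesLinODE_x (hγ : IsSminusGeodesic x y xt) : SolvesLinODE 0 x :=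
  ⟨hγ.contDiff_x, fun t => by simp [hγ.ode_x t]⟩

lemma solvesLinODE_y (hγ : IsSminusGeodesic x y xt) : SolvesLinODE (deriv x 0) y :=
  ⟨hγ.contDiff_y, fun t => by rw [hγ.ode_y t, hγ.solvesLinODE_x.deriv_eq_deriv_zero t]⟩

lemma eq_of_boundary {x' y' xt' : ℝ → ℝ} (hγ : IsSminusGeodesic x y xt)
    (hγ' : IsSminusGeodesic x' y' xt') (h0 : (x 0, y 0, xt 0) = (x' 0, y' 0, xt' 0))
    (h1 : (x 1, y 1, xt 1) = (x' 1, y' 1, xt' 1)) : x = x' ∧ y = y' ∧ xt = xt' := by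
  simp only [Prod.mk.injEq] at h0 h1
  obtain rfl : x = x' := hγ.solvesLinODE_x.eq_of_boundary hγ'.solvesLinODE_x h0.1 h1.1
  obtain rfl : y = y' := hγ.solvesLinODE_y.eq_of_boundary hγ'.solvesLinODE_y h0.2.1 h1.2.1
  refine ⟨rfl, rfl, eq_of_deriv_deriv_eq hγ.contDiff_xt hγ'.contDiff_xt (fun t => ?_) h0.2.2 h1.2.2⟩
  rw [hγ.ode_xt, hγ'.ode_xt]

end IsSminusGeodesic

lemma exists_isSminusGeodesic (P Q : ℝ × ℝ × ℝ) :
    ∃ x y xt, IsSminusGeodesic x y xt ∧ (x 0, y 0, xt 0) = P ∧ (x 1, y 1, xt 1) = Q := by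
  obtain ⟨x, hx, hx0, hx1⟩ := SolvesLinODE.exists_boundary 0 P.1 Q.1
  obtain ⟨y, hy, hy0, hy1⟩ := SolvesLinODE.exists_boundary (deriv x 0) P.2.1 Q.2.1
  have hyC1 : ContDiff ℝ 1 y := hy.1.of_le one_le_two
  obtain ⟨xt, hxt, hxt'', hxt0, hxt1⟩ :=
    exists_deriv_deriv_eq_deriv (g := fun t => -deriv x 0 * y t ^ 2) (by fun_prop) P.2.2 Q.2.2
  refine ⟨x, y, xt, ⟨hx.1, hy.1, hxt, fun t => by simp [hx.2 t], fun t => ?_, fun t => ?_⟩,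
    by simp [hx0, hy0, hxt0], by simp [hx1, hy1, hxt1]⟩
  · rw [hy.2, hx.deriv_eq_deriv_zero t]
  · rw [hxt'', hx.deriv_eq_deriv_zero t,
      (((hyC1.differentiable one_ne_zero t).hasDerivAt.fun_pow 2).const_mul _).deriv]
    ring

/-- On `S₋` (that is, `M_f` with `f(y) = -(1/2) y²`), for every pair of points
`P, Q ∈ ℝ³` there is a unique initial velocity `v` such that the geodesic
`γ = (x, y, x̃)` (solution of `x'' = 0`, `y'' = (x')² y`, `x̃'' = -2 y x' y'`)
with `γ(0) = P` and `γ'(0) = v` satisfies `γ(1) = Q`; hence the exponential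
map of `S₋` at every point is a bijection onto `ℝ³`. -/
theorem Sminus_exp_bijective (P Q : ℝ × ℝ × ℝ) :
    ∃! v : ℝ × ℝ × ℝ, ∃ x y xt : ℝ → ℝ,
      ContDiff ℝ 2 x ∧ ContDiff ℝ 2 y ∧ ContDiff ℝ 2 xt ∧
      (∀ t : ℝ, deriv (deriv x) t = 0) ∧
      (∀ t : ℝ, deriv (deriv y) t = (deriv x t) ^ 2 * y t) ∧
      (∀ t : ℝ, deriv (deriv xt) t = -2 * y t * deriv x t * deriv y t) ∧
      (x 0, y 0, xt 0) = P ∧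
      (deriv x 0, deriv y 0, deriv xt 0) = v ∧
      (x 1, y 1, xt 1) = Q := by
  obtain ⟨x, y, xt, hγ, hP, hQ⟩ := exists_isSminusGeodesic P Q
  refine ⟨_, ⟨x, y, xt, hγ.contDiff_x, hγ.contDiff_y, hγ.contDiff_xt, hγ.ode_x, hγ.ode_y,
    hγ.ode_xt, hP, rfl, hQ⟩, ?_⟩
  rintro v ⟨x', y', xt', hx', hy', hxt', ex', ey', ext', hP', rfl, hQ'⟩
  obtain ⟨rfl, rfl, rfl⟩ := IsSminusGeodesic.eq_of_boundary ⟨hx', hy', hxt', ex', ey', ext'⟩ hγ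
    (hP'.trans hP.symm) (hQ'.trans hQ.symm)
  rfl
end

section
/- Let c ≠ 0 be a real number. For all y₀, y₁ ∈ ℝ there exists a unique twice differentiable function y : [0,1] → ℝ satisfying y''(t) = c²·y(t) on [0,1] with y(0) = y₀ and y(1) = y₁. -/
/-!
Together with its derivative, a solution of `y'' = c² y` solves a linear first-order system, so
by uniqueness for ODEs with Lipschitz right-hand side it is `y(0) cosh(ct) + (y'(0)/c) sinh(ct)`
on `[0,1]`. Since `sinh c ≠ 0`, the condition `y(1) = y₁` then pins down `y'(0)`, and the
resulting combination of `cosh(ct)` and `sinh(ct)` is indeed a solution.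
-/

open Real Set

def IsBVPSol (c y₀ y₁ : ℝ) (y : ℝ → ℝ) : Prop :=
  ∃ y' : ℝ → ℝ,
    (∀ t ∈ Set.Icc (0:ℝ) 1, HasDerivWithinAt y (y' t) (Set.Icc (0:ℝ) 1) t) ∧
    (∀ t ∈ Set.Icc (0:ℝ) 1,
      HasDerivWithinAt y' (c ^ 2 * y t) (Set.Icc (0:ℝ) 1) t) ∧
    y 0 = y₀ ∧ y 1 = y₁

def IsODESolOn (k : ℝ) (s : Set ℝ) (y y' : ℝ → ℝ) : Prop :=
  (∀ t ∈ s, HasDerivWithinAt y (y' t) s t) ∧ ∀ t ∈ s, HasDerivWithinAt y' (k * y t) s t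

/-- The first-order system `(y, y')' = (y', k y)` equivalent to `y'' = k y`. -/
noncomputable def companionField (k : ℝ) : ℝ × ℝ →L[ℝ] ℝ × ℝ :=
  (ContinuousLinearMap.snd ℝ ℝ ℝ).prod (k • ContinuousLinearMap.fst ℝ ℝ ℝ)

namespace IsODESolOn

variable {k : ℝ} {s : Set ℝ} {y y' : ℝ → ℝ}

theorem hasDerivWithinAt_prodMk (h : IsODESolOn k s y y') {t : ℝ} (ht : t ∈ s) :
    HasDerivWithinAt (fun t ↦ (y t, y' t)) (companionField k (y t, y' t)) s t :=
  (h.1 t ht).prodMk (h.2 t ht)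

theorem continuousOn_prodMk (h : IsODESolOn k s y y') : ContinuousOn (fun t ↦ (y t, y' t)) s :=
  fun _ ht ↦ (h.hasDerivWithinAt_prodMk ht).continuousWithinAt

theorem eqOn {a b : ℝ} {z z' : ℝ → ℝ} (hy : IsODESolOn k (Icc a b) y y')
    (hz : IsODESolOn k (Icc a b) z z') (ha : y a = z a) (ha' : y' a = z' a) :
    EqOn y z (Icc a b) := by
  have hIci {w w' : ℝ → ℝ} (hw : IsODESolOn k (Icc a b) w w') (t : ℝ) (ht : t ∈ Ico a b) :
      HasDerivWithinAt (fun t ↦ (w t, w' t)) (companionField k (w t, w' t)) (Ici t) t :=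
    (hw.hasDerivWithinAt_prodMk (Ico_subset_Icc_self ht)).mono_of_mem_nhdsWithin
      (Icc_mem_nhdsGE_of_mem ht)
  have hpair : EqOn (fun t ↦ (y t, y' t)) (fun t ↦ (z t, z' t)) (Icc a b) :=
    ODE_solution_unique (v := fun _ ↦ companionField k) (fun _ ↦ (companionField k).lipschitz)
      hy.continuousOn_prodMk (hIci hy) hz.continuousOn_prodMk (hIci hz) (by simp [ha, ha'])
  exact fun t ht ↦ congrArg Prod.fst (hpair ht)

end IsODESolOn

noncomputable def coshSinhComb (c A B : ℝ) (t : ℝ) : ℝ :=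
  A * cosh (c * t) + B * sinh (c * t)

theorem hasDerivAt_coshSinhComb (c A B t : ℝ) :
    HasDerivAt (coshSinhComb c A B) (c * coshSinhComb c B A t) t := by
  have hct : HasDerivAt (fun t ↦ c * t) c t := by simpa using (hasDerivAt_id t).const_mul c
  exact ((hct.cosh.const_mul A).add (hct.sinh.const_mul B)).congr_deriv
    (by simp only [coshSinhComb]; ring)

theorem isODESolOn_coshSinhComb (c A B : ℝ) (s : Set ℝ) :
    IsODESolOn (c ^ 2) s (coshSinhComb c A B) (fun t ↦ c * coshSinhComb c B A t) := by
  refine ⟨fun t _ ↦ (hasDerivAt_coshSinhComb c A B t).hasDerivWithinAt, fun t _ ↦ ?_⟩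
  exact ((hasDerivAt_coshSinhComb c B A t).const_mul c).hasDerivWithinAt.congr_deriv
    (by ring)

theorem coshSinhComb_one_eq_iff {c : ℝ} (hc : c ≠ 0) (A B y : ℝ) :
    coshSinhComb c A B 1 = y ↔ B = (y - A * cosh c) / sinh c := by
  rw [eq_div_iff (sinh_ne_zero.2 hc), coshSinhComb, mul_one]
  constructor <;> intro h <;> linarith

theorem IsODESolOn.eqOn_coshSinhComb {c b : ℝ} (hc : c ≠ 0) {y y' : ℝ → ℝ}
    (h : IsODESolOn (c ^ 2) (Icc 0 b) y y') :
    EqOn y (coshSinhComb c (y 0) (y' 0 / c)) (Icc 0 b) :=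
  h.eqOn (isODESolOn_coshSinhComb c _ _ _) (by simp [coshSinhComb])
    (by simp [coshSinhComb, mul_div_cancel₀ _ hc])

/-- For `c ≠ 0` the boundary value problem `y'' = c² y`, `y(0) = y₀`,
`y(1) = y₁` on `[0,1]` has a solution, unique on `[0,1]`. -/
theorem bvp_exists_unique (c : ℝ) (hc : c ≠ 0) (y₀ y₁ : ℝ) :
    ∃ y : ℝ → ℝ, IsBVPSol c y₀ y₁ y ∧
      ∀ z : ℝ → ℝ, IsBVPSol c y₀ y₁ z → Set.EqOn z y (Set.Icc (0:ℝ) 1) := by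
  set B := (y₁ - y₀ * cosh c) / sinh c
  obtain ⟨hy, hy'⟩ := isODESolOn_coshSinhComb c y₀ B (Icc 0 1)
  refine ⟨coshSinhComb c y₀ B,
    ⟨_, hy, hy', by simp [coshSinhComb], (coshSinhComb_one_eq_iff hc _ _ _).2 rfl⟩, ?_⟩
  rintro z ⟨z', hz, hz', hz0, hz1⟩
  have hzB := IsODESolOn.eqOn_coshSinhComb hc ⟨hz, hz'⟩
  rw [hz0] at hzB
  have hB : z' 0 / c = B :=
    (coshSinhComb_one_eq_iff hc _ _ _).1 ((hzB (right_mem_Icc.2 zero_le_one)).symm.trans hz1)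
  rwa [hB] at hzB
end

section
/- Let f : ℝ → ℝ be smooth with f'(y) > 0 for all y ∈ ℝ, and suppose there exists C > 0 such that f'(y) ≤ C·|y| for all y ≤ −1. Then for every initial data x₀, y₀, z₀, x₁, y₁, z₁ ∈ ℝ there exist twice continuously differentiable functions x, y, x̃ : ℝ → ℝ defined on all of ℝ with x(0)=x₀, x'(0)=x₁, y(0)=y₀, y'(0)=y₁, x̃(0)=z₀, x̃'(0)=z₁, satisfying x'' = 0, y'' = −f'(y)·(x')², and x̃'' = 2·f'(y)·x'·y' on all of ℝ. (Hence M_f is geodesically complete.) -/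
set_option maxHeartbeats 1000000

open Set Metric Real

/-- truncation -/
noncomputable def trc (B u : ℝ) : ℝ := max (-B) (min B u)

lemma trc_eq {B u : ℝ} (h : |u| ≤ B) : trc B u = u := by
  rw [abs_le] at h
  rw [trc, min_eq_right h.2, max_eq_right h.1]

lemma trc_mem {B : ℝ} (hB : 0 ≤ B) (u : ℝ) : trc B u ∈ Icc (-B) B := by
  constructor
  · exact le_max_left _ _
  · rw [trc, max_le_iff]
    exact ⟨by linarith, min_le_left _ _⟩

lemma trc_abs_le {B : ℝ} (hB : 0 ≤ B) (u : ℝ) : |trc B u| ≤ B := by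
  rw [abs_le]
  exact ⟨(trc_mem hB u).1, (trc_mem hB u).2⟩

lemma trc_abs_le_abs {B : ℝ} (hB : 0 ≤ B) (u : ℝ) : |trc B u| ≤ |u| := by
  rcases le_or_gt (|u|) B with h | h
  · rw [trc_eq h]
  · calc |trc B u| ≤ B := trc_abs_le hB u
      _ ≤ |u| := h.le

lemma trc_mono {B : ℝ} : Monotone (trc B) := fun u v huv => by
  exact max_le_max le_rfl (min_le_min le_rfl huv)

lemma trc_lip (B : ℝ) : LipschitzWith 1 (trc B) := by
  refine LipschitzWith.of_dist_le_mul fun u v => ?_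
  rw [NNReal.coe_one, one_mul, Real.dist_eq, Real.dist_eq]
  calc |trc B u - trc B v| = |max (min B u) (-B) - max (min B v) (-B)| := by
        rw [trc, trc, max_comm (-B), max_comm (-B)]
    _ ≤ |min B u - min B v| := abs_max_sub_max_le_abs _ _ _
    _ ≤ max |B - B| |u - v| := abs_min_sub_min_le_max _ _ _ _
    _ = |u - v| := by simp [abs_nonneg]

lemma lip_const_mul (c : ℝ) {K : NNReal} {h : ℝ → ℝ} (hh : LipschitzWith K h) :
    LipschitzWith (Real.nnabs c * K) (fun x => c * h x) := by
  refine LipschitzWith.of_dist_le_mul fun u v => ?_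
  have := hh.dist_le_mul u v
  rw [Real.dist_eq, Real.dist_eq, ← mul_sub, abs_mul] at *
  push_cast
  calc |c| * |h u - h v| ≤ |c| * (K * |u - v|) := by
        refine mul_le_mul_of_nonneg_left ?_ (abs_nonneg c)
        simpa [Real.dist_eq] using this
    _ = |c| * K * |u - v| := by ring
    _ = (Real.nnabs c : ℝ) * K * |u - v| := by simp

lemma gronwallBound_le {δ K ε s T : ℝ} (hδ : 0 ≤ δ) (hK : 0 < K) (hε : 0 ≤ ε)
    (hs : 0 ≤ s) (hsT : s ≤ T) :
    gronwallBound δ K ε s ≤ δ * exp (K * T) + ε / K * (exp (K * T) - 1) := by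
  rw [gronwallBound_of_K_ne_0 hK.ne']
  have h1 : exp (K * s) ≤ exp (K * T) := exp_le_exp.2 (by nlinarith)
  have h2 : (1:ℝ) ≤ exp (K * s) := by
    rw [← exp_zero]
    exact exp_le_exp.2 (by positivity)
  have hεK : 0 ≤ ε / K := by positivity
  have := mul_le_mul_of_nonneg_left h1 hδ
  nlinarith

lemma sol_on (g : ℝ → ℝ) (hg1 : ContDiff ℝ 1 g) (hgpos : ∀ u, 0 < g u)
    (C : ℝ) (hC : 0 < C) (hlin : ∀ u : ℝ, u ≤ -1 → g u ≤ C * |u|)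
    (a : ℝ) (ha : 0 ≤ a) (y₀ y₁ T : ℝ) (hT : 0 < T) :
    ∃ Y : ℝ → ℝ × ℝ, Y 0 = (y₀, y₁) ∧ ∀ t ∈ Icc (-T) T,
      HasDerivAt Y ((Y t).2, -a * g (Y t).1) t := by
  have hgc : Continuous g := hg1.continuous
  have hgd : Differentiable ℝ g := hg1.differentiable one_ne_zero
  set U : ℝ := |y₀| + |y₁| * (T + 1) + 1 with hUdef
  have hU1 : 1 ≤ U := by
    rw [hUdef]
    nlinarith [abs_nonneg y₀, mul_nonneg (abs_nonneg y₁) (show (0:ℝ) ≤ T+1 by linarith)]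
  -- bound for g on Icc (-1) U
  obtain ⟨M₀, hM₀⟩ := isCompact_Icc.exists_bound_of_continuousOn
    (s := Icc (-1 : ℝ) U) hgc.continuousOn
  set M : ℝ := max C M₀ with hMdef
  have hM0 : 0 < M := lt_max_of_lt_left hC
  set ε : ℝ := a * M with hεdef
  have hε0 : 0 ≤ ε := mul_nonneg ha hM0.le
  set K : ℝ := 1 + ε with hKdef
  have hK0 : 0 < K := by rw [hKdef]; linarith
  set δ : ℝ := ‖((y₀ : ℝ), (y₁ : ℝ))‖ with hδdef
  have hδ0 : 0 ≤ δ := norm_nonneg _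
  set Bd : ℝ := δ * exp (K * (T + 1)) + ε / K * (exp (K * (T + 1)) - 1) with hBddef
  have hBd0 : 0 ≤ Bd := by
    have h2 : (1:ℝ) ≤ exp (K * (T + 1)) :=
      le_trans (by nlinarith) (Real.add_one_le_exp (K * (T+1)))
    have h3 : 0 ≤ ε / K := div_nonneg hε0 hK0.le
    have t1 : 0 ≤ δ * exp (K * (T+1)) := mul_nonneg hδ0 (exp_nonneg _)
    have t2 : 0 ≤ ε / K * (exp (K * (T+1)) - 1) := mul_nonneg h3 (by linarith)
    rw [hBddef]
    linarith
  set B : ℝ := max (Bd + 1) (U + 1) with hBdef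
  have hB0 : 0 ≤ B := le_trans (by linarith) (le_max_right _ _)
  have hB1 : 1 ≤ B := le_trans (by linarith) (le_max_right _ _)
  have hBU : U + 1 ≤ B := le_max_right _ _
  have hBBd : Bd + 1 ≤ B := le_max_left _ _
  -- bound for g on Icc (-B) B
  obtain ⟨Mg₀, hMg₀⟩ := isCompact_Icc.exists_bound_of_continuousOn
    (s := Icc (-B : ℝ) B) hgc.continuousOn
  set Mg : ℝ := max Mg₀ 0 with hMgdef
  have hMg : ∀ u : ℝ, g (trc B u) ≤ Mg := fun u => by
    calc g (trc B u) ≤ |g (trc B u)| := le_abs_self _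
      _ ≤ Mg₀ := by simpa using hMg₀ _ (trc_mem hB0 u)
      _ ≤ Mg := le_max_left _ _
  have hMg0 : 0 ≤ Mg := le_max_right _ _
  -- Lipschitz constant of g on Icc (-B) B
  obtain ⟨cg, hcg⟩ := isCompact_Icc.exists_bound_of_continuousOn
    (s := Icc (-B : ℝ) B) (hg1.continuous_deriv le_rfl).continuousOn
  have hcg0 : 0 ≤ cg := le_trans (norm_nonneg _) (hcg 0 ⟨by linarith, by linarith⟩)
  have hgLip : LipschitzOnWith cg.toNNReal g (Icc (-B) B) := by
    refine Convex.lipschitzOnWith_of_nnnorm_deriv_le (fun x _ => hgd x) (fun x hx => ?_)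
      (convex_Icc _ _)
    rw [← NNReal.coe_le_coe, coe_nnnorm, Real.coe_toNNReal _ hcg0]
    exact hcg x hx
  -- the truncated vector field
  set V : ℝ × ℝ → ℝ × ℝ := fun p => (trc B p.2, -a * g (trc B p.1)) with hVdef
  have hVlip : ∃ LV : NNReal, LipschitzWith LV V := by
    have h1 := (trc_lip B).comp (LipschitzWith.prod_snd (α := ℝ) (β := ℝ))
    have h2 : LipschitzWith (cg.toNNReal * 1) (fun u : ℝ => g (trc B u)) := by
      rw [← lipschitzOnWith_univ]
      exact hgLip.comp ((trc_lip B).lipschitzOnWith) (fun u _ => trc_mem hB0 u)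
    have h3 := lip_const_mul (-a) h2
    have h4 := h3.comp (LipschitzWith.prod_fst (α := ℝ) (β := ℝ))
    exact ⟨_, h1.prodMk h4⟩
  obtain ⟨LV, hVlip⟩ := hVlip
  set Cb : ℝ := max B (a * Mg) with hCbdef
  have hCb0 : 0 ≤ Cb := le_trans hB0 (le_max_left _ _)
  have hVnorm : ∀ p : ℝ × ℝ, ‖V p‖ ≤ Cb := fun p => by
    rw [Prod.norm_def]
    refine max_le ?_ ?_
    · rw [Real.norm_eq_abs]
      exact le_trans (trc_abs_le hB0 _) (le_max_left _ _)
    · rw [Real.norm_eq_abs, abs_mul, abs_neg, abs_of_nonneg ha,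
        abs_of_nonneg (hgpos _).le]
      exact le_trans (mul_le_mul_of_nonneg_left (hMg _) ha) (le_max_right _ _)
  -- Picard–Lindelöf
  have hpl : IsPicardLindelof (fun _ : ℝ => V) (tmin := -(T+1)) (tmax := T+1)
      ⟨0, by constructor <;> linarith⟩ (y₀, y₁) (Cb * (T+1)).toNNReal 0 Cb.toNNReal LV :=
    IsPicardLindelof.of_time_independent
      (fun x _ => by rw [Real.coe_toNNReal _ hCb0]; exact hVnorm x)
      hVlip.lipschitzOnWith (by
        show (Cb.toNNReal : ℝ) * max ((T+1) - 0) (0 - -(T+1)) ≤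
          ((Cb * (T+1)).toNNReal : ℝ) - ((0:NNReal) : ℝ)
        rw [Real.coe_toNNReal _ hCb0, Real.coe_toNNReal _ (mul_nonneg hCb0 (by linarith)),
          NNReal.coe_zero, sub_zero, sub_zero, zero_sub, neg_neg, max_self])
  obtain ⟨Y, hY0', hYd⟩ := hpl.exists_eq_forall_mem_Icc_hasDerivWithinAt₀
  have hY0 : Y 0 = (y₀, y₁) := hY0'
  have hYdAt : ∀ t ∈ Ioo (-(T+1)) (T+1), HasDerivAt Y (V (Y t)) t := fun t ht =>
    (hYd t (Ioo_subset_Icc_self ht)).hasDerivAt (Icc_mem_nhds ht.1 ht.2)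
  have hYcont : ContinuousOn Y (Icc (-(T+1)) (T+1)) := fun t ht =>
    (hYd t ht).continuousWithinAt
  -- component derivatives on the open interval
  have hy' : ∀ t ∈ Ioo (-(T+1)) (T+1),
      HasDerivAt (fun s => (Y s).1) (trc B (Y t).2) t := fun t ht =>
    (ContinuousLinearMap.fst ℝ ℝ ℝ).hasFDerivAt.comp_hasDerivAt t (hYdAt t ht)
  have hv' : ∀ t ∈ Ioo (-(T+1)) (T+1),
      HasDerivAt (fun s => (Y s).2) (-a * g (trc B (Y t).1)) t := fun t ht =>
    (ContinuousLinearMap.snd ℝ ℝ ℝ).hasFDerivAt.comp_hasDerivAt t (hYdAt t ht)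
  -- the second component is antitone
  have hanti : AntitoneOn (fun s => (Y s).2) (Icc (-(T+1)) (T+1)) := by
    refine antitoneOn_of_deriv_nonpos (convex_Icc _ _)
      (continuous_snd.comp_continuousOn hYcont) (fun t ht => ?_) (fun t ht => ?_)
    · rw [interior_Icc] at ht
      exact (hv' t ht).differentiableAt.differentiableWithinAt
    · rw [interior_Icc] at ht
      rw [(hv' t ht).deriv]
      have := (hgpos (trc B (Y t).1)).le
      nlinarith
  have h0mem : (0 : ℝ) ∈ Icc (-(T+1)) (T+1) := ⟨by linarith, by linarith⟩
  have hv0 : (Y 0).2 = y₁ := by rw [hY0]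
  -- trc B y₁ bounds
  have htrcy₁ : trc B y₁ ≤ |y₁| := by
    rw [trc]
    refine max_le (by linarith [abs_nonneg y₁]) (le_trans (min_le_right _ _) (le_abs_self _))
  have htrcy₁' : -|y₁| ≤ trc B y₁ := by
    rcases le_total y₁ B with h | h
    · refine le_trans ?_ (le_max_right _ _)
      rw [min_eq_right h]
      exact neg_abs_le _
    · refine le_trans ?_ (le_max_right _ _)
      rw [min_eq_left h]
      linarith [abs_nonneg y₁]
  -- upper bound on the first component
  have hUbd : ∀ t ∈ Icc (-(T+1)) (T+1), (Y t).1 ≤ U := by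
    intro t ht
    rcases le_total 0 t with h0t | ht0
    · -- forward in time
      have hw : AntitoneOn (fun s => (Y s).1 - |y₁| * s) (Icc 0 (T+1)) := by
        refine antitoneOn_of_deriv_nonpos (convex_Icc _ _) ?_ (fun s hs => ?_) (fun s hs => ?_)
        · exact ((continuous_fst.comp_continuousOn hYcont).mono
            (Icc_subset_Icc (by linarith) le_rfl)).sub
            (continuous_const.mul continuous_id).continuousOn
        · rw [interior_Icc] at hs
          have hs' : s ∈ Ioo (-(T+1)) (T+1) := ⟨by linarith [hs.1], hs.2⟩
          exact ((hy' s hs').sub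
            ((hasDerivAt_id s).const_mul |y₁|)).differentiableAt.differentiableWithinAt
        · rw [interior_Icc] at hs
          have hs' : s ∈ Ioo (-(T+1)) (T+1) := ⟨by linarith [hs.1], hs.2⟩
          rw [((hy' s hs').fun_sub (by simpa using (hasDerivAt_id s).const_mul |y₁|)).deriv]
          have hvs : (Y s).2 ≤ y₁ := by
            rw [← hv0]
            exact hanti h0mem ⟨by linarith [hs.1], by linarith [hs.2]⟩ hs.1.le
          have := trc_mono (B := B) hvs
          linarith [htrcy₁]
      have := hw ⟨le_rfl, by linarith⟩ ⟨h0t, ht.2⟩ h0t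
      simp only [mul_zero, sub_zero, hY0] at this
      have habs : |y₁| * t ≤ |y₁| * (T + 1) :=
        mul_le_mul_of_nonneg_left (by linarith [ht.2]) (abs_nonneg _)
      have : (Y t).1 ≤ y₀ + |y₁| * t := by linarith
      calc (Y t).1 ≤ y₀ + |y₁| * t := this
        _ ≤ |y₀| + |y₁| * (T+1) := by linarith [le_abs_self y₀]
        _ ≤ U := by rw [hUdef]; linarith
    · -- backward in time
      have hw : MonotoneOn (fun s => (Y s).1 + |y₁| * s) (Icc (-(T+1)) 0) := by
        refine monotoneOn_of_deriv_nonneg (convex_Icc _ _) ?_ (fun s hs => ?_) (fun s hs => ?_)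
        · exact ((continuous_fst.comp_continuousOn hYcont).mono
            (Icc_subset_Icc le_rfl (by linarith))).add
            (continuous_const.mul continuous_id).continuousOn
        · rw [interior_Icc] at hs
          have hs' : s ∈ Ioo (-(T+1)) (T+1) := ⟨hs.1, by linarith [hs.2]⟩
          exact ((hy' s hs').add
            ((hasDerivAt_id s).const_mul |y₁|)).differentiableAt.differentiableWithinAt
        · rw [interior_Icc] at hs
          have hs' : s ∈ Ioo (-(T+1)) (T+1) := ⟨hs.1, by linarith [hs.2]⟩
          rw [((hy' s hs').fun_add (by simpa using (hasDerivAt_id s).const_mul |y₁|)).deriv]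
          have hvs : y₁ ≤ (Y s).2 := by
            rw [← hv0]
            exact hanti ⟨hs.1.le, by linarith [hs.2]⟩ h0mem hs.2.le
          have := trc_mono (B := B) hvs
          linarith [htrcy₁']
      have := hw ⟨ht.1, ht0⟩ ⟨by linarith, le_rfl⟩ ht0
      simp only [mul_zero, add_zero, hY0] at this
      have habs : -(|y₁| * t) ≤ |y₁| * (T + 1) := by
        nlinarith [mul_nonneg (abs_nonneg y₁) (show (0:ℝ) ≤ T+1+t by linarith [ht.1])]
      calc (Y t).1 ≤ y₀ - |y₁| * t := by linarith
        _ ≤ |y₀| + |y₁| * (T+1) := by linarith [le_abs_self y₀]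
        _ ≤ U := by rw [hUdef]; linarith
  -- linear growth bound for the truncated g below U
  have hglin : ∀ u : ℝ, u ≤ U → g (trc B u) ≤ M * (1 + |u|) := by
    intro u hu
    rcases le_or_gt (-1) u with h1 | h1
    · have habs : |u| ≤ B := by
        rw [abs_le]
        constructor <;> [linarith; linarith]
      rw [trc_eq habs]
      have : g u ≤ |g u| := le_abs_self _
      have h2 : |g u| ≤ M₀ := by simpa using hM₀ u ⟨h1, hu⟩
      have h3 : M₀ ≤ M := le_max_right _ _
      nlinarith [abs_nonneg u]
    · have hmin : min B u = u := min_eq_right (by linarith)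
      have htrc : trc B u = max (-B) u := by rw [trc, hmin]
      have hle : trc B u ≤ -1 := by
        rw [htrc]
        exact max_le (by linarith) h1.le
      have habs : |trc B u| ≤ |u| := trc_abs_le_abs hB0 u
      have := hlin _ hle
      have hCM : C ≤ M := le_max_left _ _
      have h1u : (1:ℝ) ≤ |u| := by rw [abs_of_neg (by linarith)]; linarith
      calc g (trc B u) ≤ C * |trc B u| := this
        _ ≤ C * |u| := mul_le_mul_of_nonneg_left habs hC.le
        _ ≤ M * (1 + |u|) := by nlinarith [abs_nonneg u]
  -- the Grönwall bound for ‖V p‖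
  have hVbd : ∀ p : ℝ × ℝ, p.1 ≤ U → ‖V p‖ ≤ K * ‖p‖ + ε := by
    intro p hp
    rw [Prod.norm_def]
    have hp1 : |p.1| ≤ ‖p‖ := by
      rw [Prod.norm_def, Real.norm_eq_abs, Real.norm_eq_abs]; exact le_max_left _ _
    have hp2 : |p.2| ≤ ‖p‖ := by
      rw [Prod.norm_def, Real.norm_eq_abs, Real.norm_eq_abs]; exact le_max_right _ _
    have hpn : 0 ≤ ‖p‖ := norm_nonneg _
    refine max_le ?_ ?_
    · rw [Real.norm_eq_abs]
      have := trc_abs_le_abs hB0 p.2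
      rw [hKdef, hεdef]
      nlinarith
    · rw [Real.norm_eq_abs, abs_mul, abs_neg, abs_of_nonneg ha,
        abs_of_nonneg (hgpos _).le]
      have := hglin p.1 hp
      rw [hKdef, hεdef]
      nlinarith
  -- Grönwall forward
  have hfwd : ∀ s ∈ Icc (0:ℝ) (T+1), ‖Y s‖ ≤ Bd := by
    have hmain := norm_le_gronwallBound_of_norm_deriv_right_le (f := Y)
      (f' := fun s => V (Y s)) (δ := δ) (K := K) (ε := ε) (a := 0) (b := T+1)
      (hYcont.mono (Icc_subset_Icc (by linarith) le_rfl))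
      (fun s hs => (hYdAt s ⟨by linarith [hs.1], hs.2⟩).hasDerivWithinAt)
      (by rw [hY0])
      (fun s hs => hVbd (Y s) (hUbd s ⟨by linarith [hs.1], hs.2.le⟩))
    intro s hs
    have := hmain s hs
    rw [sub_zero] at this
    exact le_trans this (gronwallBound_le hδ0 hK0 hε0 hs.1 hs.2)
  -- Grönwall backward
  have hbwd : ∀ s ∈ Icc (0:ℝ) (T+1), ‖Y (-s)‖ ≤ Bd := by
    have hZd : ∀ s ∈ Ico (0:ℝ) (T+1),
        HasDerivWithinAt (fun u => Y (-u)) (-V (Y (-s))) (Ici s) s := by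
      intro s hs
      have hmem : -s ∈ Ioo (-(T+1)) (T+1) := ⟨by linarith [hs.2], by linarith [hs.1]⟩
      have := (hYdAt (-s) hmem).scomp s (hasDerivAt_neg s)
      exact this.hasDerivWithinAt.congr_deriv (by simp)
    have hZcont : ContinuousOn (fun u => Y (-u)) (Icc (0:ℝ) (T+1)) := by
      refine hYcont.comp continuous_neg.continuousOn (fun u hu => ?_)
      exact ⟨by linarith [hu.2], by linarith [hu.1]⟩
    have hmain := norm_le_gronwallBound_of_norm_deriv_right_le (f := fun u => Y (-u))
      (f' := fun s => -V (Y (-s))) (δ := δ) (K := K) (ε := ε) (a := 0) (b := T+1)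
      hZcont hZd (by show ‖Y (-(0:ℝ))‖ ≤ δ; rw [neg_zero, hY0])
      (fun s hs => by
        rw [norm_neg]
        exact hVbd (Y (-s)) (hUbd (-s) ⟨by linarith [hs.2], by linarith [hs.1]⟩))
    intro s hs
    have := hmain s hs
    rw [sub_zero] at this
    exact le_trans this (gronwallBound_le hδ0 hK0 hε0 hs.1 hs.2)
  have hBdall : ∀ t ∈ Icc (-(T+1)) (T+1), ‖Y t‖ ≤ Bd := by
    intro t ht
    rcases le_total 0 t with h | h
    · exact hfwd t ⟨h, ht.2⟩
    · have := hbwd (-t) ⟨by linarith, by linarith [ht.1]⟩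
      rwa [neg_neg] at this
  -- conclusion
  refine ⟨Y, hY0, fun t ht => ?_⟩
  have htIoo : t ∈ Ioo (-(T+1)) (T+1) := ⟨by linarith [ht.1], by linarith [ht.2]⟩
  have hD := hYdAt t htIoo
  have hn := hBdall t (Ioo_subset_Icc_self htIoo)
  rw [Prod.norm_def] at hn
  have h1 : |(Y t).1| ≤ B := by
    rw [Real.norm_eq_abs, Real.norm_eq_abs] at hn
    linarith [le_max_left |(Y t).1| |(Y t).2|, hn]
  have h2 : |(Y t).2| ≤ B := by
    rw [Real.norm_eq_abs, Real.norm_eq_abs] at hn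
    linarith [le_max_right |(Y t).1| |(Y t).2|, hn]
  have hVeq : V (Y t) = ((Y t).2, -a * g (Y t).1) := by
    rw [hVdef]
    simp only [trc_eq h1, trc_eq h2]
  rwa [hVeq] at hD

lemma sol_global (g : ℝ → ℝ) (hg1 : ContDiff ℝ 1 g) (hgpos : ∀ u, 0 < g u)
    (C : ℝ) (hC : 0 < C) (hlin : ∀ u : ℝ, u ≤ -1 → g u ≤ C * |u|)
    (a : ℝ) (ha : 0 ≤ a) (y₀ y₁ : ℝ) :
    ∃ Y : ℝ → ℝ × ℝ, Y 0 = (y₀, y₁) ∧ ∀ t : ℝ,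
      HasDerivAt Y ((Y t).2, -a * g (Y t).1) t := by
  set F : ℝ × ℝ → ℝ × ℝ := fun p => (p.2, -a * g p.1) with hFdef
  have hFc : ContDiff ℝ 1 F :=
    ContDiff.prodMk contDiff_snd (contDiff_const.mul (hg1.comp contDiff_fst))
  have hex : ∀ n : ℕ, ∃ Y : ℝ → ℝ × ℝ, Y 0 = (y₀, y₁) ∧
      ∀ t ∈ Icc (-((n:ℝ)+1)) ((n:ℝ)+1), HasDerivAt Y (F (Y t)) t :=
    fun n => sol_on g hg1 hgpos C hC hlin a ha y₀ y₁ ((n:ℝ)+1) (by positivity)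
  choose Yn hYn0 hYnd using hex
  -- continuity of each Yn on its interval
  have hYncont : ∀ n : ℕ, ContinuousOn (Yn n) (Icc (-((n:ℝ)+1)) ((n:ℝ)+1)) :=
    fun n t ht => ((hYnd n t ht).continuousAt).continuousWithinAt
  -- uniqueness
  have huniq : ∀ m n : ℕ, ∀ t : ℝ, |t| ≤ (m:ℝ)+1 → |t| ≤ (n:ℝ)+1 → Yn m t = Yn n t := by
    intro m n t htm htn
    set k : ℝ := min ((m:ℝ)+1) ((n:ℝ)+1) with hkdef
    have hk1 : 1 ≤ k := le_min (by linarith [Nat.cast_nonneg (α := ℝ) m]) (by linarith [Nat.cast_nonneg (α := ℝ) n])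
    have hsubm : Icc (-k) k ⊆ Icc (-((m:ℝ)+1)) ((m:ℝ)+1) :=
      Icc_subset_Icc (neg_le_neg (min_le_left _ _)) (min_le_left _ _)
    have hsubn : Icc (-k) k ⊆ Icc (-((n:ℝ)+1)) ((n:ℝ)+1) :=
      Icc_subset_Icc (neg_le_neg (min_le_right _ _)) (min_le_right _ _)
    -- a common bound for both trajectories
    obtain ⟨r₁, hr₁⟩ := isCompact_Icc.exists_bound_of_continuousOn
      ((hYncont m).mono hsubm)
    obtain ⟨r₂, hr₂⟩ := isCompact_Icc.exists_bound_of_continuousOn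
      ((hYncont n).mono hsubn)
    set r : ℝ := max (max r₁ r₂) 0 with hrdef
    have hr0 : 0 ≤ r := le_max_right _ _
    -- Lipschitz bound for F on the closed ball
    obtain ⟨cF, hcF⟩ := (isCompact_closedBall (0 : ℝ × ℝ) r).exists_bound_of_continuousOn
      (hFc.continuous_fderiv one_ne_zero).continuousOn
    have hcF0 : 0 ≤ cF := le_trans (norm_nonneg _)
      (hcF 0 (mem_closedBall_self hr0))
    have hFlip : LipschitzOnWith cF.toNNReal F (closedBall (0 : ℝ × ℝ) r) := by
      refine Convex.lipschitzOnWith_of_nnnorm_fderiv_le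
        (fun x _ => hFc.differentiable one_ne_zero x) (fun x hx => ?_) (convex_closedBall _ _)
      rw [← NNReal.coe_le_coe, coe_nnnorm, Real.coe_toNNReal _ hcF0]
      exact hcF x hx
    have hmemm : ∀ s ∈ Ioo (-k) k, Yn m s ∈ closedBall (0 : ℝ × ℝ) r := by
      intro s hs
      rw [mem_closedBall, dist_zero_right]
      exact le_trans (hr₁ s (Ioo_subset_Icc_self hs))
        (le_trans (le_max_left _ _) (le_max_left _ _))
    have hmemn : ∀ s ∈ Ioo (-k) k, Yn n s ∈ closedBall (0 : ℝ × ℝ) r := by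
      intro s hs
      rw [mem_closedBall, dist_zero_right]
      exact le_trans (hr₂ s (Ioo_subset_Icc_self hs))
        (le_trans (le_max_right _ _) (le_max_left _ _))
    have heq := ODE_solution_unique_of_mem_Icc (v := fun _ : ℝ => F)
      (s := fun _ : ℝ => closedBall (0 : ℝ × ℝ) r)
      (fun _ _ => hFlip) (t₀ := 0) (a := -k) (b := k)
      ⟨by linarith, by linarith⟩
      ((hYncont m).mono hsubm)
      (fun s hs => hYnd m s (hsubm (Ioo_subset_Icc_self hs)))
      hmemm
      ((hYncont n).mono hsubn)
      (fun s hs => hYnd n s (hsubn (Ioo_subset_Icc_self hs)))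
      hmemn
      (by rw [hYn0 m, hYn0 n])
    exact heq ⟨(abs_le.mp (le_min htm htn)).1, (abs_le.mp (le_min htm htn)).2⟩
  -- glue the solutions
  refine ⟨fun t => Yn ⌈|t|⌉₊ t, by simpa using hYn0 ⌈|(0:ℝ)|⌉₊, fun t => ?_⟩
  have hcons : ∀ (n : ℕ) (s : ℝ), |s| ≤ (n:ℝ)+1 → Yn ⌈|s|⌉₊ s = Yn n s := by
    intro n s hsn
    exact huniq _ n s (le_trans (Nat.le_ceil _) (by linarith)) hsn
  set n : ℕ := ⌈|t|⌉₊ with hndef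
  have htn : |t| ≤ (n:ℝ) := Nat.le_ceil _
  have hD : HasDerivAt (Yn n) (F (Yn n t)) t :=
    hYnd n t ⟨by linarith [abs_le.mp htn |>.1], by linarith [abs_le.mp htn |>.2]⟩
  have hEq : (fun s => Yn ⌈|s|⌉₊ s) =ᶠ[nhds t] Yn n := by
    have hmem : Ioo (-((n:ℝ)+1)) ((n:ℝ)+1) ∈ nhds t := by
      refine Ioo_mem_nhds ?_ ?_
      · linarith [abs_le.mp htn |>.1]
      · linarith [abs_le.mp htn |>.2]
    refine Filter.eventuallyEq_of_mem hmem (fun s hs => ?_)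
    exact hcons n s (abs_le.mpr ⟨hs.1.le, hs.2.le⟩)
  have := hD.congr_of_eventuallyEq hEq
  have hval : Yn ⌈|t|⌉₊ t = Yn n t := by rw [← hndef]
  rw [hFdef] at this
  simpa [hval] using this

/-- If `f` is smooth with `f' > 0` everywhere and `f'(y) ≤ C |y|` for
`y ≤ -1`, then `M_f` is geodesically complete: every solution of the geodesic
system `x'' = 0`, `y'' = -f'(y) (x')²`, `x̃'' = 2 f'(y) x' y'` with prescribed
initial data exists on all of `ℝ`. -/
theorem Mf_sublinear_geodesically_complete (f : ℝ → ℝ) (hf : ContDiff ℝ (⊤ : ℕ∞) f)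
    (hpos : ∀ u : ℝ, 0 < deriv f u)
    (C : ℝ) (hC : 0 < C) (hlin : ∀ u : ℝ, u ≤ -1 → deriv f u ≤ C * |u|) :
    ∀ x₀ y₀ z₀ x₁ y₁ z₁ : ℝ, ∃ x y xt : ℝ → ℝ,
      ContDiff ℝ 2 x ∧ ContDiff ℝ 2 y ∧ ContDiff ℝ 2 xt ∧
      x 0 = x₀ ∧ deriv x 0 = x₁ ∧
      y 0 = y₀ ∧ deriv y 0 = y₁ ∧
      xt 0 = z₀ ∧ deriv xt 0 = z₁ ∧
      (∀ t : ℝ, deriv (deriv x) t = 0) ∧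
      (∀ t : ℝ, deriv (deriv y) t = -deriv f (y t) * (deriv x t) ^ 2) ∧
      (∀ t : ℝ, deriv (deriv xt) t = 2 * deriv f (y t) * deriv x t * deriv y t) := by
  intro x₀ y₀ z₀ x₁ y₁ z₁
  have h21 : ((2 : WithTop ℕ∞)) = 1 + 1 := by norm_num
  have hf2 : ContDiff ℝ 2 f := hf.of_le (WithTop.coe_le_coe.mpr (le_top : (2 : ℕ∞) ≤ ⊤))
  have hf1 : ContDiff ℝ 1 f := hf.of_le (by simp)
  have hg1 : ContDiff ℝ 1 (deriv f) := by
    rw [h21, contDiff_succ_iff_deriv] at hf2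
    exact hf2.2.2
  set g : ℝ → ℝ := deriv f with hgdef
  set a : ℝ := x₁ ^ 2 with hadef
  have ha : 0 ≤ a := sq_nonneg _
  obtain ⟨Y, hY0, hYd⟩ := sol_global g hg1 hpos C hC hlin a ha y₀ y₁
  have hYdiff : Differentiable ℝ Y := fun t => (hYd t).differentiableAt
  -- the three functions
  set x : ℝ → ℝ := fun t => x₀ + x₁ * t with hxdef
  set y : ℝ → ℝ := fun t => (Y t).1 with hydef
  have hy' : ∀ t, HasDerivAt y ((Y t).2) t := fun t =>
    (ContinuousLinearMap.fst ℝ ℝ ℝ).hasFDerivAt.comp_hasDerivAt t (hYd t)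
  have hv' : ∀ t, HasDerivAt (fun s => (Y s).2) (-a * g (y t)) t := fun t =>
    (ContinuousLinearMap.snd ℝ ℝ ℝ).hasFDerivAt.comp_hasDerivAt t (hYd t)
  have hyc : Continuous y := continuous_fst.comp hYdiff.continuous
  have hderivy : deriv y = fun t => (Y t).2 := funext fun t => (hy' t).deriv
  have hx' : ∀ t, HasDerivAt x x₁ t := fun t => by
    exact ((hasDerivAt_const t x₀).fun_add ((hasDerivAt_id t).const_mul x₁)).congr_deriv (by simp)
  have hderivx : deriv x = fun _ => x₁ := funext fun t => (hx' t).deriv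
  have hy2 : ContDiff ℝ 2 y := by
    rw [h21, contDiff_succ_iff_deriv]
    refine ⟨fun t => (hy' t).differentiableAt, by simp, ?_⟩
    rw [hderivy, contDiff_one_iff_deriv]
    refine ⟨fun t => (hv' t).differentiableAt, ?_⟩
    rw [funext fun t => (hv' t).deriv]
    exact continuous_const.mul (hg1.continuous.comp hyc)
  have hy1 : ContDiff ℝ 1 y := hy2.of_le (by norm_num)
  -- the xt function
  have hcont : Continuous (fun s => f (y s) - f y₀) :=
    (hf1.continuous.comp hyc).sub continuous_const
  set I : ℝ → ℝ := fun t => ∫ s in (0:ℝ)..t, (f (y s) - f y₀) with hIdef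
  have hI : ∀ t, HasDerivAt I (f (y t) - f y₀) t := fun t =>
    intervalIntegral.integral_hasDerivAt_right (hcont.intervalIntegrable _ _)
      (hcont.stronglyMeasurableAtFilter _ _) hcont.continuousAt
  set xt : ℝ → ℝ := fun t => z₀ + z₁ * t + 2 * x₁ * I t with hxtdef
  have hxt' : ∀ t, HasDerivAt xt (z₁ + 2 * x₁ * (f (y t) - f y₀)) t := fun t => by
    have := ((hasDerivAt_const t z₀).fun_add ((hasDerivAt_id t).const_mul z₁)).fun_add
      ((hI t).const_mul (2 * x₁))
    exact this.congr_deriv (by simp)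
  have hderivxt : deriv xt = fun t => z₁ + 2 * x₁ * (f (y t) - f y₀) :=
    funext fun t => (hxt' t).deriv
  have hfd : ∀ u, HasDerivAt f (g u) u := fun u =>
    (hf1.differentiable one_ne_zero u).hasDerivAt
  have hfy : ∀ t, HasDerivAt (fun s => f (y s)) (g (y t) * (Y t).2) t := fun t =>
    (hfd (y t)).comp t (hy' t)
  have hxt'' : ∀ t, HasDerivAt (fun s => z₁ + 2 * x₁ * (f (y s) - f y₀))
      (2 * x₁ * (g (y t) * (Y t).2)) t := fun t => by
    have := (((hfy t).sub_const (f y₀)).const_mul (2 * x₁)).const_add z₁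
    simpa using this
  have hxt2 : ContDiff ℝ 2 xt := by
    rw [h21, contDiff_succ_iff_deriv]
    refine ⟨fun t => (hxt' t).differentiableAt, by simp, ?_⟩
    rw [hderivxt]
    exact contDiff_const.add (contDiff_const.mul ((hf1.comp hy1).sub contDiff_const))
  have hy0 : y 0 = y₀ := by rw [hydef]; simp [hY0]
  refine ⟨x, y, xt, ?_, hy2, hxt2, ?_, ?_, hy0, ?_, ?_, ?_, ?_, ?_, ?_⟩
  · exact contDiff_const.add (contDiff_const.mul contDiff_id)
  · simp [hxdef]
  · rw [hderivx]
  · rw [hderivy]; simp [hY0]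
  · rw [hxtdef]; simp [hIdef]
  · rw [hderivxt]; simp [hy0]
  · intro t
    rw [hderivx]
    simp
  · intro t
    rw [hderivy, (hv' t).deriv, hderivx]
    rw [hadef]
    ring
  · intro t
    rw [hderivxt, (hxt'' t).deriv, hderivx, hderivy]
    ring
end

section
/- Let f : ℝ → ℝ be smooth with f''(y) ≠ 0 and f'''(y) ≠ 0 for all y ∈ ℝ. If there is a constant c with f'(y)·f'''(y) = c·(f''(y))² for all y ∈ ℝ, then c = 1 and there exist constants a ≠ 0 and b ≠ 0 such that f'(y) = a·e^{by} for all y ∈ ℝ. (If c ≠ 1 the solutions are of the form f'(y) = α(y+β)^γ, which cannot have f'' and f''' globally defined and nonvanishing on all of ℝ.) -/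
/-- For `f` smooth with `f''` and `f'''` nowhere vanishing: if the affine
2-model invariant `f' f''' / (f'')²` is a constant `c`, then `c = 1` and
`f'(y) = a e^{b y}` for some constants `a ≠ 0`, `b ≠ 0`. -/
theorem affine_two_model_invariant (f : ℝ → ℝ) (hf : ContDiff ℝ (⊤ : ℕ∞) f)
    (h2 : ∀ u : ℝ, deriv (deriv f) u ≠ 0)
    (h3 : ∀ u : ℝ, deriv (deriv (deriv f)) u ≠ 0)
    (c : ℝ)
    (hc : ∀ u : ℝ, deriv f u * deriv (deriv (deriv f)) u
        = c * (deriv (deriv f) u) ^ 2) :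
    c = 1 ∧ ∃ a b : ℝ, a ≠ 0 ∧ b ≠ 0 ∧
      ∀ u : ℝ, deriv f u = a * Real.exp (b * u) := by
  set g := deriv f with hgdef
  have hf' : ContDiff ℝ ((⊤ : ℕ∞) : WithTop ℕ∞) f := hf.of_le (by simp)
  have hg : ContDiff ℝ ((⊤ : ℕ∞) : WithTop ℕ∞) g := (contDiff_infty_iff_deriv.mp hf').2
  have hgd : Differentiable ℝ g := (contDiff_infty_iff_deriv.mp hg).1
  have hg1 : ContDiff ℝ ((⊤ : ℕ∞) : WithTop ℕ∞) (deriv g) := (contDiff_infty_iff_deriv.mp hg).2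
  have hg1d : Differentiable ℝ (deriv g) := (contDiff_infty_iff_deriv.mp hg1).1
  -- g never vanishes
  have hgne : ∀ u, g u ≠ 0 := by
    intro u hu
    have hcu := hc u
    rw [hu, zero_mul] at hcu
    have hc0 : c = 0 := by
      have := pow_ne_zero 2 (h2 u)
      rcases mul_eq_zero.mp hcu.symm with h | h
      · exact h
      · exact absurd h this
    have hall : ∀ x, g x = 0 := by
      intro x
      have hx := hc x
      rw [hc0, zero_mul] at hx
      exact (mul_eq_zero.mp hx).resolve_right (h3 x)
    have hgz : g = fun _ => (0 : ℝ) := funext hall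
    have : deriv g 0 = 0 := by rw [hgz]; simp
    exact h2 0 this
  -- v = g / g' has derivative 1 - c
  set v : ℝ → ℝ := fun y => g y / deriv g y with hvdef
  have hv : ∀ y, HasDerivAt v (1 - c) y := by
    intro y
    have h := ((hgd y).hasDerivAt).div ((hg1d y).hasDerivAt) (h2 y)
    have key : (deriv g y * deriv g y - g y * deriv (deriv g) y) / deriv g y ^ 2
        = 1 - c := by
      rw [hc y, div_eq_iff (pow_ne_zero 2 (h2 y))]
      ring
    rwa [key] at h
  -- v is affine: v y = v 0 + (1-c) y
  have hvaff : ∀ y, v y = v 0 + (1 - c) * y := by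
    intro y
    have hw : ∀ x, HasDerivAt (fun t => v t - (1 - c) * t) 0 x := by
      intro x
      have := (hv x).sub ((hasDerivAt_id x).const_mul (1 - c))
      simp only [id_eq, mul_one, sub_self] at this
      exact this
    have hconst : ∀ x z : ℝ, (fun t => v t - (1 - c) * t) x
        = (fun t => v t - (1 - c) * t) z :=
      is_const_of_deriv_eq_zero (fun x => (hw x).differentiableAt)
        (fun x => (hw x).deriv)
    have := hconst y 0
    simp at this
    linarith
  have hvne : ∀ y, v y ≠ 0 := fun y => div_ne_zero (hgne y) (h2 y)
  -- c = 1
  have hc1 : c = 1 := by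
    by_contra hne
    have h1c : (1 : ℝ) - c ≠ 0 := sub_ne_zero.mpr (Ne.symm hne)
    have := hvaff (-(v 0) / (1 - c))
    rw [mul_div_cancel₀ _ h1c] at this
    simp at this
    exact hvne _ this
  subst hc1
  refine ⟨rfl, g 0, 1 / v 0, hgne 0, one_div_ne_zero (hvne 0), ?_⟩
  -- now v is constant = v 0, so g' = (1 / v 0) * g
  set b := 1 / v 0 with hbdef
  have hvc : ∀ y, v y = v 0 := by intro y; rw [hvaff y]; ring
  have hode : ∀ y, deriv g y = b * g y := by
    intro y
    have hy : g y / deriv g y = g 0 / deriv g 0 := hvc y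
    rw [div_eq_div_iff (h2 y) (h2 0)] at hy
    have hb : b = deriv g 0 / g 0 := by
      rw [hbdef, hvdef]
      simp only [one_div]
      rw [inv_div]
    rw [hb, div_mul_eq_mul_div, eq_div_iff (hgne 0)]
    linear_combination -hy
  -- g y * exp (-b y) is constant
  have hF : ∀ y, HasDerivAt (fun t => g t * Real.exp (-b * t)) 0 y := by
    intro y
    have he : HasDerivAt (fun t => Real.exp (-b * t)) (-b * Real.exp (-b * y)) y := by
      have h := ((hasDerivAt_id y).const_mul (-b)).exp
      convert h using 1
      show -b * Real.exp (-b * y) = Real.exp (-b * y) * (-b * 1)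
      ring
      rfl
    have := ((hgd y).hasDerivAt).mul he
    have h0 : deriv g y * Real.exp (-b * y) + g y * (-b * Real.exp (-b * y)) = 0 := by
      rw [hode y]; ring
    rwa [h0] at this
  have hconst : ∀ x z : ℝ, g x * Real.exp (-b * x) = g z * Real.exp (-b * z) :=
    is_const_of_deriv_eq_zero (fun x => (hF x).differentiableAt)
      (fun x => (hF x).deriv)
  intro u
  have h := hconst u 0
  calc g u = g u * Real.exp (-b * u) * Real.exp (b * u) := by
        rw [mul_assoc, ← Real.exp_add]; simp
    _ = g 0 * Real.exp (-b * 0) * Real.exp (b * u) := by rw [h]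
    _ = g 0 * Real.exp (b * u) := by simp
end
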